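/- Let φ : [0,∞) → [0,∞) be an unbounded concave function with φ(0) = 0 and lim_{t→0+} φ(t) = 0. Then for all 0 ≤ x < y there exists a unique ω = ω(x,y) with x ≤ ω ≤ min{(x+y)/2, 2x} such that φ(x) − φ(y) + φ(y − ω) − φ(ω − x) = 0. Moreover, ω(x,y) = x for all 0 ≤ x ≤ y if and only if there exists λ > 0 such that φ(t) = λt for all t ≥ 0. -/

import Mathlib

/-- `d` is a metric on `X`: it vanishes exactly on the diagonal, is symmetric,
and satisfies the triangle inequality. -/
def IsMetricOn {X : Type*} (d : X → X → ℝ) : Prop :=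
  (∀ x y : X, d x y = 0 ↔ x = y) ∧ (∀ x y : X, d x y = d y x) ∧
    (∀ x y z : X, d x z ≤ d x y + d y z)

/-- `φ : [0,∞) → [0,∞)` is a metric transform: for every metric space `(X,d)`,
`φ ∘ d` is again a metric on `X`. -/
def IsMetricTransform (φ : ℝ → ℝ) : Prop :=
  ∀ (X : Type) (d : X → X → ℝ), IsMetricOn d → IsMetricOn (fun x y => φ (d x y))

/-- The Gromov product `(x|y)_w` for a distance function `d`. -/
noncomputable def gromovProd {X : Type*} (d : X → X → ℝ) (w x y : X) : ℝ :=
  (d x w + d y w - d x y) / 2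

/-- `d` is `δ`-hyperbolic: `(x|y)_w ≥ min{(x|z)_w, (y|z)_w} − δ` for all `x,y,z,w`. -/
def IsDeltaHyp {X : Type*} (d : X → X → ℝ) (δ : ℝ) : Prop :=
  ∀ w x y z : X, min (gromovProd d w x z) (gromovProd d w y z) - δ ≤ gromovProd d w x y

/-- `d` is Gromov hyperbolic: it is `δ`-hyperbolic for some `δ ≥ 0`. -/
def IsGromovHyp {X : Type*} (d : X → X → ℝ) : Prop :=
  ∃ δ : ℝ, 0 ≤ δ ∧ IsDeltaHyp d δ

/-- `φ` is approximately nondecreasing on `[0,∞)`: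
`η`-nondecreasing for some `η ≥ 0`. -/
def ApproxNondecreasing (φ : ℝ → ℝ) : Prop :=
  ∃ η : ℝ, 0 ≤ η ∧ ∀ t s : ℝ, 0 ≤ t → t ≤ s → φ t ≤ φ s + η

/-- `φ` is unbounded on `[0,∞)`. -/
def UnboundedOnNonneg (φ : ℝ → ℝ) : Prop :=
  ∀ M : ℝ, ∃ t : ℝ, 0 ≤ t ∧ M < φ t

/-- `φ` is a `(λ,k)`-approximate dilation for some `λ > 0`, `k ≥ 0`. -/
def ApproxDilation (φ : ℝ → ℝ) : Prop :=
  ∃ lam k : ℝ, 0 < lam ∧ 0 ≤ k ∧ ∀ t : ℝ, 0 ≤ t → |φ t - lam * t| ≤ k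

/-- `φ` is logarithm-like: `t ↦ φ(2t) − φ(t)` is bounded from above on `[0,∞)`. -/
def LogarithmLike (φ : ℝ → ℝ) : Prop :=
  ∃ C : ℝ, ∀ t : ℝ, 0 ≤ t → φ (2 * t) - φ t ≤ C

/-- The distance `|x − y|_φ = φ(|x − y|)` on the half line `[0,∞)`. -/
noncomputable def halfLineDist (φ : ℝ → ℝ) (x y : {t : ℝ // 0 ≤ t}) : ℝ :=
  φ |x.1 - y.1|

/-- `(X,d)` contains a `k`-rough geodesic ray for some `k ≥ 0`. -/
def HasRoughGeodesicRay (X : Type*) (d : X → X → ℝ) : Prop :=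
  ∃ k : ℝ, 0 ≤ k ∧ ∃ γ : ℝ → X, ∀ t s : ℝ, 0 ≤ t → 0 ≤ s →
    |t - s| - k ≤ d (γ t) (γ s) ∧ d (γ t) (γ s) ≤ |t - s| + k

/-- `d` is approximately ultrametric: `δ`-ultrametric for some `δ ≥ 0`. -/
def ApproxUltrametric {X : Type*} (d : X → X → ℝ) : Prop :=
  ∃ δ : ℝ, 0 ≤ δ ∧ ∀ x y z : X, d x y ≤ max (d x z) (d z y) + δ

/-- `d` is `k`-roughly geodesic: every pair of points is joined by a `k`-rough
geodesic segment. -/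
def RoughlyGeodesicK {X : Type*} (d : X → X → ℝ) (k : ℝ) : Prop :=
  ∀ x y : X, ∃ b : ℝ, 0 ≤ b ∧ ∃ γ : ℝ → X, γ 0 = x ∧ γ b = y ∧
    ∀ t s : ℝ, t ∈ Set.Icc 0 b → s ∈ Set.Icc 0 b →
      |t - s| - k ≤ d (γ t) (γ s) ∧ d (γ t) (γ s) ≤ |t - s| + k

/-- `d` has the `k`-rough midpoint property. -/
def RoughMidpointK {X : Type*} (d : X → X → ℝ) (k : ℝ) : Prop :=
  ∀ x y : X, ∃ z : X, max (d x z) (d y z) ≤ d x y / 2 + k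

/-- `(a,b,c)` is a triangle triplet. -/
def IsTriangleTriplet (a b c : ℝ) : Prop := a ≤ b + c ∧ b ≤ a + c ∧ c ≤ a + b

/-
For `0 ≤ x < y` the function `ω ↦ φ x - φ y + φ (y - ω) - φ (ω - x)` is continuous and strictly
decreasing on `[x, min ((x + y) / 2) (2x)]`: it is `≥ 0` at `ω = x` by subadditivity and `≤ 0` at
the right endpoint by monotonicity, so it has exactly one zero there.
If `ω = x` always solves the equation, then `y = 2x` gives `φ (2t) / (2t) = φ t / t`; as
`t ↦ φ t / t` is antitone for concave `φ` with `φ 0 = 0`, it is then constant.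
-/

open Set

theorem UnboundedOnNonneg.not_bddAbove {φ : ℝ → ℝ} (hub : UnboundedOnNonneg φ) :
    ¬ BddAbove (φ '' Ici 0) := by
  rintro ⟨M, hM⟩
  obtain ⟨t, ht, hMt⟩ := hub M
  exact (hM ⟨t, ht, rfl⟩).not_gt hMt

section Concave

variable {φ : ℝ → ℝ}

theorem ConcaveOn.continuousOn_Ici_of_tendsto_nhdsGT (hconc : ConcaveOn ℝ (Ici 0) φ)
    (h0 : φ 0 = 0) (hlim : Filter.Tendsto φ (nhdsWithin 0 (Ioi 0)) (nhds 0)) :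
    ContinuousOn φ (Ici 0) :=
  hconc.continuousOn_Ici (continuousWithinAt_Ioi_iff_Ici.1 (by rwa [ContinuousWithinAt, h0]))

/-- Being bounded on `[a, s]`, `φ` exceeds `φ s` at some `u > s`; a concave function that rises
from `s` to `u` is strictly increasing up to `s`. -/
theorem ConcaveOn.strictMonoOn_Ici_of_not_bddAbove {a : ℝ} (hconc : ConcaveOn ℝ (Ici a) φ)
    (hcont : ContinuousOn φ (Ici a)) (hub : ¬ BddAbove (φ '' Ici a)) :
    StrictMonoOn φ (Ici a) := by
  intro t ht s hs hts
  obtain ⟨M, hM⟩ :=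
    isCompact_Icc.bddAbove_image (hcont.mono (Icc_subset_Ici_self : Icc a s ⊆ Ici a))
  obtain ⟨_, ⟨u, hu, rfl⟩, hMu⟩ := not_bddAbove_iff.1 hub M
  have hsM : φ s ≤ M := hM ⟨s, ⟨hs, le_rfl⟩, rfl⟩
  have hsu : s < u := lt_of_not_ge fun hus => (hM ⟨u, ⟨hu, hus⟩, rfl⟩).not_gt hMu
  exact hconc.strictMonoOn hu hsu (hsM.trans_lt hMu) ⟨ht, hts.le⟩ ⟨hs, le_refl s⟩ hts

theorem ConcaveOn.antitoneOn_div_self (hconc : ConcaveOn ℝ (Ici 0) φ) (h0 : φ 0 = 0) :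
    AntitoneOn (fun t => φ t / t) (Ioi 0) := by
  intro s hs t ht hst
  simpa [slope_def_field, h0] using
    hconc.antitoneOn_slope_gt self_mem_Ici ⟨mem_Ici.2 hs.le, hs⟩ ⟨mem_Ici.2 ht.le, ht⟩ hst

theorem ConcaveOn.map_add_le (hconc : ConcaveOn ℝ (Ici 0) φ) (h0 : φ 0 = 0)
    {a b : ℝ} (ha : 0 ≤ a) (hb : 0 ≤ b) : φ (a + b) ≤ φ a + φ b := by
  rcases ha.eq_or_lt with rfl | ha
  · simp [h0]
  rcases hb.eq_or_lt with rfl | hb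
  · simp [h0]
  have hanti := hconc.antitoneOn_div_self h0
  have hab : 0 < a + b := add_pos ha hb
  calc φ (a + b) = a * (φ (a + b) / (a + b)) + b * (φ (a + b) / (a + b)) := by
        field_simp
    _ ≤ a * (φ a / a) + b * (φ b / b) := by
        have hla := hanti ha hab (by linarith : a ≤ a + b)
        have hlb := hanti hb hab (by linarith : b ≤ a + b)
        dsimp only at hla hlb
        gcongr
    _ = φ a + φ b := by field_simp

end Concave

theorem AntitoneOn.eq_of_map_two_mul {g : ℝ → ℝ} (hg : AntitoneOn g (Ioi 0))
    (h2 : ∀ t, 0 < t → g (2 * t) = g t) {s u : ℝ} (hs : 0 < s) (hu : 0 < u) : g s = g u := by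
  wlog hsu : s ≤ u generalizing s u
  · exact (this hu hs (le_of_not_ge hsu)).symm
  have hpow : ∀ n : ℕ, g (2 ^ n * s) = g s := by
    intro n
    induction n with
    | zero => simp
    | succ n ih => rw [pow_succ', mul_assoc, h2 (2 ^ n * s) (by positivity), ih]
  obtain ⟨n, hn⟩ := pow_unbounded_of_one_lt (u / s) one_lt_two
  have hun : u ≤ 2 ^ n * s := by rw [div_lt_iff₀ hs] at hn; exact hn.le
  refine le_antisymm ?_ (hg hs hu hsu)
  rw [← hpow n]
  exact hg hu (show 0 < 2 ^ n * s by positivity) hun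

theorem existsUnique_eq_zero_of_strictAntiOn {f : ℝ → ℝ} {a b : ℝ} (hab : a ≤ b)
    (hcont : ContinuousOn f (Icc a b)) (hanti : StrictAntiOn f (Icc a b))
    (ha : 0 ≤ f a) (hb : f b ≤ 0) : ∃! c, c ∈ Icc a b ∧ f c = 0 := by
  obtain ⟨c, hc, hfc⟩ := intermediate_value_Icc' hab hcont ⟨hb, ha⟩
  exact ⟨c, ⟨hc, hfc⟩, fun d ⟨hd, hfd⟩ => hanti.injOn hd hc (hfd.trans hfc.symm)⟩

theorem existsUnique_gromov_equalizer {φ : ℝ → ℝ} (hmono : StrictMonoOn φ (Ici 0))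
    (hcont : ContinuousOn φ (Ici 0))
    (hsub : ∀ a b : ℝ, 0 ≤ a → 0 ≤ b → φ (a + b) ≤ φ a + φ b) (h0 : φ 0 = 0)
    {x y : ℝ} (hx : 0 ≤ x) (hxy : x < y) :
    ∃! ω : ℝ, (x ≤ ω ∧ ω ≤ min ((x + y) / 2) (2 * x)) ∧
      φ x - φ y + φ (y - ω) - φ (ω - x) = 0 := by
  set m := min ((x + y) / 2) (2 * x)
  have hxm : x ≤ m := le_min (by linarith) (by linarith)
  have hmy : m < y := (min_le_left _ _).trans_lt (by linarith)
  refine existsUnique_eq_zero_of_strictAntiOn (f := fun ω => φ x - φ y + φ (y - ω) - φ (ω - x))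
    hxm ?_ ?_ ?_ ?_
  · have hleft : ContinuousOn (fun ω => φ (y - ω)) (Icc x m) :=
      hcont.comp (continuousOn_const.sub continuousOn_id)
        fun ω hω => show 0 ≤ y - ω by linarith [hω.2]
    have hright : ContinuousOn (fun ω => φ (ω - x)) (Icc x m) :=
      hcont.comp (continuousOn_id.sub continuousOn_const)
        fun ω hω => show 0 ≤ ω - x by linarith [hω.1]
    exact (continuousOn_const.add hleft).sub hright
  · intro a ha b hb hab
    have := hmono (show 0 ≤ y - b by linarith [hb.2]) (show 0 ≤ y - a by linarith [ha.2])
      (by linarith)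
    have := hmono.monotoneOn (show 0 ≤ a - x by linarith [ha.1])
      (show 0 ≤ b - x by linarith [hb.1]) (by linarith)
    dsimp only
    linarith
  · have := hsub x (y - x) hx (by linarith)
    simp only [add_sub_cancel, sub_self, h0] at this ⊢
    linarith
  · rcases min_choice ((x + y) / 2) (2 * x) with hm | hm
    · have := hmono hx (show 0 ≤ y by linarith) hxy
      simp only [m, hm, show y - (x + y) / 2 = (x + y) / 2 - x by ring]
      linarith
    · have := hmono.monotoneOn (show 0 ≤ y - 2 * x by linarith)
        (show 0 ≤ y by linarith) (by linarith)
      simp only [m, hm, show 2 * x - x = x by ring]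
      linarith

theorem stmt_17_general (φ : ℝ → ℝ)
    (hconc : ConcaveOn ℝ (Set.Ici 0) φ)
    (h0 : φ 0 = 0)
    (hlim : Filter.Tendsto φ (nhdsWithin 0 (Set.Ioi 0)) (nhds 0))
    (hub : UnboundedOnNonneg φ) :
    (∀ x y : ℝ, 0 ≤ x → x < y →
      ∃! ω : ℝ, (x ≤ ω ∧ ω ≤ min ((x + y) / 2) (2 * x)) ∧
        φ x - φ y + φ (y - ω) - φ (ω - x) = 0) ∧
    ((∀ x y : ℝ, 0 ≤ x → x ≤ y → φ x - φ y + φ (y - x) - φ (x - x) = 0) ↔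
      ∃ lam : ℝ, 0 < lam ∧ ∀ t : ℝ, 0 ≤ t → φ t = lam * t) := by
  have hcont := hconc.continuousOn_Ici_of_tendsto_nhdsGT h0 hlim
  have hmono := hconc.strictMonoOn_Ici_of_not_bddAbove hcont hub.not_bddAbove
  refine ⟨fun x y hx hxy => existsUnique_gromov_equalizer hmono hcont
    (fun a b => hconc.map_add_le h0) h0 hx hxy, ⟨fun H => ?_, ?_⟩⟩
  · have hdouble : ∀ t, 0 < t → φ (2 * t) / (2 * t) = φ t / t := by
      intro t ht
      have := H t (2 * t) ht.le (by linarith)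
      rw [sub_self, h0, show 2 * t - t = t by ring] at this
      field_simp
      linarith
    have hone : 0 < φ 1 := by simpa [h0] using hmono self_mem_Ici (mem_Ici.2 zero_le_one) one_pos
    refine ⟨φ 1, hone, fun t ht => ?_⟩
    rcases ht.eq_or_lt with rfl | ht
    · simp [h0]
    have := (hconc.antitoneOn_div_self h0).eq_of_map_two_mul hdouble ht one_pos
    field_simp at this
    linarith
  · rintro ⟨lam, -, hlin⟩ x y hx hxy
    rw [sub_self, h0, hlin x hx, hlin y (hx.trans hxy), hlin (y - x) (by linarith)]
    ring

/-- Existence and uniqueness of the equalizing point `ω(x,y)`, and the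
characterization of dilations. -/
theorem stmt_17 (φ : ℝ → ℝ)
    (hnonneg : ∀ t : ℝ, 0 ≤ t → 0 ≤ φ t)
    (hconc : ConcaveOn ℝ (Set.Ici 0) φ)
    (h0 : φ 0 = 0)
    (hlim : Filter.Tendsto φ (nhdsWithin 0 (Set.Ioi 0)) (nhds 0))
    (hub : UnboundedOnNonneg φ) :
    (∀ x y : ℝ, 0 ≤ x → x < y →
      ∃! ω : ℝ, (x ≤ ω ∧ ω ≤ min ((x + y) / 2) (2 * x)) ∧
        φ x - φ y + φ (y - ω) - φ (ω - x) = 0) ∧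
    ((∀ x y : ℝ, 0 ≤ x → x ≤ y → φ x - φ y + φ (y - x) - φ (x - x) = 0) ↔
      ∃ lam : ℝ, 0 < lam ∧ ∀ t : ℝ, 0 ≤ t → φ t = lam * t) :=
  stmt_17_general φ hconc h0 hlim hub
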